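/- Let λ > 2. For every F_{I^J}-periodic orbit x₁, …, xₙ with associated matrices A₁, …, Aₙ, the product A := Aₙ·…·A₁ (an element of the triangle group Γ̃_λ, with det A ∈ {1, −1}) is hyperbolic in the sense that |tr(A²)| > 2; equivalently, if det A = 1 then |tr A| > 2, and if det A = −1 then tr A ≠ 0. Moreover the Möbius transformation of A fixes x₁. -/

import Mathlib

open Matrix

/-- The Möbius action of a real 2×2 matrix on real numbers, `g.x = (ax+b)/(cx+d)`. -/
noncomputable def moebiusM (g : Matrix (Fin 2) (Fin 2) ℝ) (x : ℝ) : ℝ :=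
  (g 0 0 * x + g 0 1) / (g 1 0 * x + g 1 1)

/-- The denominator `cx + d` of the Möbius action. -/
def moebiusMDenom (g : Matrix (Fin 2) (Fin 2) ℝ) (x : ℝ) : ℝ :=
  g 1 0 * x + g 1 1

/-- `x : Fin (n+1) → ℝ` is an `F_{I^J}`-periodic orbit (for the billiard flow on the
triangle surface) with associated matrices `A : Fin (n+1) → Γ̃_λ`: for each `k`
(cyclically), either `xₖ ∈ (−1,0)` and `Aₖ = g₂ = !![λ,1;-1,0]`, or `xₖ ∈ (0,1)` and
`Aₖ = q = g₂J = !![-λ,1;1,0]`, or `xₖ ∈ (−1+mλ, −1+(m+1)λ)` and `Aₖ = T⁻ᵐ` for some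
`m ≥ 1`; and `Aₖ.xₖ = xₖ₊₁` (with nonvanishing denominator). -/
def IsFIJPeriodicOrbit (lam : ℝ) (n : ℕ)
    (x : Fin (n + 1) → ℝ) (A : Fin (n + 1) → Matrix (Fin 2) (Fin 2) ℝ) : Prop :=
  ∀ k : Fin (n + 1),
    ((x k ∈ Set.Ioo (-1 : ℝ) 0 ∧ A k = !![lam, 1; -1, 0]) ∨
      (x k ∈ Set.Ioo (0 : ℝ) 1 ∧ A k = !![-lam, 1; 1, 0]) ∨
      (∃ m : ℕ, 1 ≤ m ∧ x k ∈ Set.Ioo (-1 + m * lam) (-1 + (m + 1) * lam) ∧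
        A k = (!![1, -lam; 0, 1]) ^ m)) ∧
    moebiusMDenom (A k) (x k) ≠ 0 ∧ moebiusM (A k) (x k) = x (k + 1)

/-!
Along the orbit, `A` maps `x₁` back to itself, and its denominator `D` at `x₁` is the product of
the denominators of the single steps. A step `g₂` or `q` has denominator `∓xₖ`, of modulus `< 1`;
a translation `T⁻ᵐ` has denominator `1` but moves the point to the left by `mλ`, so a closed orbit
contains a step of the first kind and `|D| < 1`. Clearing the denominator in `A.x₁ = x₁` gives
`tr A · D = D² + det A`: for `det A = 1` this is `|tr A| = |D + 1/D| > 2`, for `det A = -1` it is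
`tr A = D - 1/D ≠ 0`.
-/

open Fin.NatCast

section Moebius

@[simp]
lemma moebiusM_of (a b c d x : ℝ) : moebiusM !![a, b; c, d] x = (a * x + b) / (c * x + d) := rfl

@[simp]
lemma moebiusMDenom_of (a b c d x : ℝ) : moebiusMDenom !![a, b; c, d] x = c * x + d := rfl

variable (B M : Matrix (Fin 2) (Fin 2) ℝ) (x : ℝ)

lemma moebiusMDenom_mul (hM : moebiusMDenom M x ≠ 0) :
    moebiusMDenom (B * M) x = moebiusMDenom B (moebiusM M x) * moebiusMDenom M x := by
  unfold moebiusMDenom moebiusM at *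
  simp only [mul_apply, Fin.sum_univ_two]
  field_simp
  ring

lemma moebiusM_mul (hM : moebiusMDenom M x ≠ 0) (hB : moebiusMDenom B (moebiusM M x) ≠ 0) :
    moebiusM (B * M) x = moebiusM B (moebiusM M x) := by
  have hBM : moebiusMDenom (B * M) x ≠ 0 := by
    rw [moebiusMDenom_mul B M x hM]
    exact mul_ne_zero hB hM
  unfold moebiusMDenom moebiusM at *
  simp only [mul_apply, Fin.sum_univ_two] at hBM ⊢
  field_simp
  ring

lemma trace_mul_moebiusMDenom_of_moebiusM_eq_self (hD : moebiusMDenom M x ≠ 0)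
    (hfix : moebiusM M x = x) :
    M.trace * moebiusMDenom M x = moebiusMDenom M x ^ 2 + M.det := by
  unfold moebiusM moebiusMDenom at *
  rw [div_eq_iff hD] at hfix
  rw [trace_fin_two, det_fin_two]
  linear_combination M 1 0 * hfix

end Moebius

lemma trace_mul_self_fin_two (M : Matrix (Fin 2) (Fin 2) ℝ) :
    (M * M).trace = M.trace ^ 2 - 2 * M.det := by
  rw [trace_fin_two, trace_fin_two, det_fin_two, mul_apply, mul_apply]
  simp only [Fin.sum_univ_two]
  ring

lemma fin_two_unipotent_pow {R : Type*} [CommRing R] (b : R) (m : ℕ) :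
    !![1, b; 0, 1] ^ m = !![1, m * b; 0, 1] := by
  induction m with
  | zero => simp [one_fin_two]
  | succ k ih =>
    rw [pow_succ, ih, mul_fin_two]
    simp [add_mul, add_comm]

lemma det_list_prod_eq_one_or_eq_neg_one {m R : Type*} [Fintype m] [DecidableEq m] [CommRing R]
    (L : List (Matrix m m R)) (h : ∀ M ∈ L, M.det = 1 ∨ M.det = -1) :
    L.prod.det = 1 ∨ L.prod.det = -1 :=
  L.prod_induction (fun M => M.det = 1 ∨ M.det = -1)
    (fun M N hM hN => by rcases hM with hM | hM <;> rcases hN with hN | hN <;> simp [hM, hN])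
    (by simp) h

lemma Fin.exists_le_apply_add_one {α : Type*} [AddCommGroup α] [LinearOrder α]
    [IsOrderedAddMonoid α] {n : ℕ} (f : Fin (n + 1) → α) : ∃ k, f k ≤ f (k + 1) := by
  by_contra! h
  have hsum : ∑ k, f (k + 1) < ∑ k, f k :=
    Finset.sum_lt_sum_of_nonempty Finset.univ_nonempty fun k _ => h k
  rw [← Equiv.sum_comp (Equiv.addRight 1) f] at hsum
  exact lt_irrefl _ hsum

lemma Finset.abs_prod_lt_one {ι : Type*} [DecidableEq ι] {s : Finset ι} {f : ι → ℝ}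
    (hle : ∀ i ∈ s, |f i| ≤ 1) {j : ι} (hj : j ∈ s) (hlt : |f j| < 1) : |∏ i ∈ s, f i| < 1 := by
  rw [Finset.abs_prod, ← Finset.mul_prod_erase s _ hj]
  calc |f j| * ∏ i ∈ s.erase j, |f i| ≤ |f j| * 1 := by
        gcongr
        exact Finset.prod_le_one (fun i _ => abs_nonneg _) fun i hi => hle i (s.mem_of_mem_erase hi)
    _ < 1 := by rwa [mul_one]

lemma moebius_take_prod_of_chain {n : ℕ} {x : Fin (n + 1) → ℝ}
    {A : Fin (n + 1) → Matrix (Fin 2) (Fin 2) ℝ}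
    (hchain : ∀ k, moebiusMDenom (A k) (x k) ≠ 0 ∧ moebiusM (A k) (x k) = x (k + 1))
    {k : ℕ} (hk : k ≤ n + 1) :
    moebiusMDenom ((List.ofFn A).take k).reverse.prod (x 0) =
        ∏ i ∈ Finset.range k, moebiusMDenom (A i) (x i) ∧
      moebiusM ((List.ofFn A).take k).reverse.prod (x 0) = x k := by
  induction k with
  | zero => simp [moebiusM, moebiusMDenom]
  | succ k ih =>
    obtain ⟨hD, hM⟩ := ih (by omega)
    obtain ⟨hstepD, hstep⟩ := hchain k
    have hprod : ((List.ofFn A).take (k + 1)).reverse.prod =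
        A k * ((List.ofFn A).take k).reverse.prod := by
      rw [List.take_add_one, List.getElem?_ofFn]
      simp [show k < n + 1 by omega, Fin.natCast_eq_mk]
    have hPD : moebiusMDenom ((List.ofFn A).take k).reverse.prod (x 0) ≠ 0 := by
      rw [hD]
      exact Finset.prod_ne_zero_iff.mpr fun i _ => (hchain i).1
    rw [hprod, moebiusMDenom_mul _ _ _ hPD, moebiusM_mul _ _ _ hPD (hM ▸ hstepD), hM, hD,
      Finset.prod_range_succ, mul_comm, hstep]
    push_cast
    exact ⟨rfl, rfl⟩

lemma two_lt_abs_of_mul_eq_sq_add_one {t D : ℝ} (hD : |D| < 1) (h : t * D = D ^ 2 + 1) :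
    2 < |t| := by
  have hD2 : D ^ 2 < 1 := by rwa [← sq_abs, sq_lt_one_iff₀ (abs_nonneg D)]
  have hsq : (t ^ 2 - 4) * D ^ 2 = (D ^ 2 - 1) ^ 2 := by
    linear_combination (t * D + D ^ 2 + 1) * h
  have ht : 4 < t ^ 2 := by nlinarith [sq_nonneg D]
  nlinarith [sq_abs t, abs_nonneg t]

lemma ne_zero_of_mul_eq_sq_sub_one {t D : ℝ} (hD : |D| < 1) (h : t * D = D ^ 2 - 1) : t ≠ 0 := by
  rintro rfl
  nlinarith [sq_abs D, abs_nonneg D]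

/-- The derivative of `M` at its fixed point `x` is `det M / D²`, so `|D| < 1` says that `x` is a
repelling fixed point; this forces `M` to be hyperbolic. -/
lemma hyperbolic_of_moebiusM_eq_self {M : Matrix (Fin 2) (Fin 2) ℝ} {x : ℝ}
    (hdet : M.det = 1 ∨ M.det = -1) (hD : moebiusMDenom M x ≠ 0)
    (hD1 : |moebiusMDenom M x| < 1) (hfix : moebiusM M x = x) :
    2 < |(M * M).trace| ∧ (M.det = 1 → 2 < |M.trace|) ∧ (M.det = -1 → M.trace ≠ 0) := by
  have hkey := trace_mul_moebiusMDenom_of_moebiusM_eq_self M x hD hfix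
  have hone (h : M.det = 1) : 2 < |M.trace| :=
    two_lt_abs_of_mul_eq_sq_add_one hD1 (by rw [hkey, h])
  have hneg (h : M.det = -1) : M.trace ≠ 0 :=
    ne_zero_of_mul_eq_sq_sub_one hD1 (by rw [hkey, h, sub_eq_add_neg])
  refine ⟨?_, hone, hneg⟩
  rw [trace_mul_self_fin_two]
  rcases hdet with h | h
  · have h4 : 4 < M.trace ^ 2 := by nlinarith [sq_abs M.trace, hone h]
    rw [h, abs_of_pos (by linarith)]
    linarith
  · have h0 : 0 < M.trace ^ 2 := by have := hneg h; positivity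
    rw [h, abs_of_pos (by linarith)]
    linarith

namespace IsFIJPeriodicOrbit

variable {lam : ℝ} {n : ℕ} {x : Fin (n + 1) → ℝ} {A : Fin (n + 1) → Matrix (Fin 2) (Fin 2) ℝ}

lemma det_eq_one_or_eq_neg_one (horb : IsFIJPeriodicOrbit lam n x A) (k : Fin (n + 1)) :
    (A k).det = 1 ∨ (A k).det = -1 := by
  rcases (horb k).1 with ⟨-, hA⟩ | ⟨-, hA⟩ | ⟨m, -, -, hA⟩
  · simp [hA, det_fin_two_of]
  · simp [hA, det_fin_two_of]
  · simp [hA, det_pow, det_fin_two_of]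

lemma abs_moebiusMDenom_le_one (horb : IsFIJPeriodicOrbit lam n x A) (k : Fin (n + 1)) :
    |moebiusMDenom (A k) (x k)| ≤ 1 := by
  rcases (horb k).1 with ⟨⟨hx₀, hx₁⟩, hA⟩ | ⟨⟨hx₀, hx₁⟩, hA⟩ | ⟨m, -, -, hA⟩
  · rw [hA, moebiusMDenom_of, abs_le]
    constructor <;> linarith
  · rw [hA, moebiusMDenom_of, abs_le]
    constructor <;> linarith
  · simp [hA, fin_two_unipotent_pow, moebiusMDenom_of]

/-- Only the translations `T⁻ᵐ` have denominator `1`, and they move points to the left. -/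
lemma abs_moebiusMDenom_lt_one_of_le (hlam : 0 < lam) (horb : IsFIJPeriodicOrbit lam n x A)
    {k : Fin (n + 1)} (hk : x k ≤ x (k + 1)) : |moebiusMDenom (A k) (x k)| < 1 := by
  obtain ⟨hcase, -, hnext⟩ := horb k
  rcases hcase with ⟨⟨hx₀, hx₁⟩, hA⟩ | ⟨⟨hx₀, hx₁⟩, hA⟩ | ⟨m, hm, -, hA⟩
  · rw [hA, moebiusMDenom_of, abs_lt]
    constructor <;> linarith
  · rw [hA, moebiusMDenom_of, abs_lt]
    constructor <;> linarith
  · have hmove : x (k + 1) = x k - m * lam := by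
      rw [← hnext, hA, fin_two_unipotent_pow, moebiusM_of]
      ring
    have : (1 : ℝ) ≤ m := by exact_mod_cast hm
    nlinarith

end IsFIJPeriodicOrbit

/-- For `λ > 2`, the product `A = Aₙ·…·A₁` of the matrices associated to an
`F_{I^J}`-periodic orbit has determinant `±1` and is hyperbolic: `|tr(A²)| > 2`;
equivalently, if `det A = 1` then `|tr A| > 2` and if `det A = −1` then `tr A ≠ 0`.
Moreover the Möbius transformation of `A` fixes `x₁`. -/
theorem FIJ_periodic_orbit_product_hyperbolic
    (lam : ℝ) (hlam : 2 < lam)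
    (n : ℕ) (x : Fin (n + 1) → ℝ) (A : Fin (n + 1) → Matrix (Fin 2) (Fin 2) ℝ)
    (horb : IsFIJPeriodicOrbit lam n x A) :
    ((List.ofFn A).reverse.prod.det = 1 ∨ (List.ofFn A).reverse.prod.det = -1) ∧
    2 < |Matrix.trace ((List.ofFn A).reverse.prod * (List.ofFn A).reverse.prod)| ∧
    ((List.ofFn A).reverse.prod.det = 1 →
      2 < |Matrix.trace ((List.ofFn A).reverse.prod)|) ∧
    ((List.ofFn A).reverse.prod.det = -1 →
      Matrix.trace ((List.ofFn A).reverse.prod) ≠ 0) ∧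
    moebiusMDenom ((List.ofFn A).reverse.prod) (x 0) ≠ 0 ∧
    moebiusM ((List.ofFn A).reverse.prod) (x 0) = x 0 := by
  obtain ⟨hD, hfix⟩ := moebius_take_prod_of_chain (fun k => (horb k).2) le_rfl
  rw [List.take_of_length_le (by simp)] at hD hfix
  rw [Nat.cast_add, Nat.cast_one, Fin.natCast_eq_last, Fin.last_add_one] at hfix
  have hdet := det_list_prod_eq_one_or_eq_neg_one (List.ofFn A).reverse fun M hM => by
    obtain ⟨k, rfl⟩ := List.mem_ofFn.mp (List.mem_reverse.mp hM)
    exact horb.det_eq_one_or_eq_neg_one k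
  have hDne : moebiusMDenom (List.ofFn A).reverse.prod (x 0) ≠ 0 := by
    rw [hD]
    exact Finset.prod_ne_zero_iff.mpr fun i _ => (horb i).2.1
  obtain ⟨k, hk⟩ := Fin.exists_le_apply_add_one x
  have hD1 : |moebiusMDenom (List.ofFn A).reverse.prod (x 0)| < 1 := by
    rw [hD]
    refine Finset.abs_prod_lt_one (fun i _ => horb.abs_moebiusMDenom_le_one i)
      (Finset.mem_range.mpr k.isLt) ?_
    rw [Fin.cast_val_eq_self]
    exact horb.abs_moebiusMDenom_lt_one_of_le (by linarith) hk
  obtain ⟨hsq, hone, hneg⟩ := hyperbolic_of_moebiusM_eq_self hdet hDne hD1 hfix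
  exact ⟨hdet, hsq, hone, hneg, hDne, hfix⟩
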